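/- Let $T_n$ denote the Chebyshev polynomial of the first kind of degree $n \ge 1$. Then the function $\mathcal{P}(z) = 1 / T_n(1/z)$ is the probability generating function of some random variable taking values in the positive integers: its power series expansion around $0$ has nonnegative coefficients, converges for $|z| \le 1$, and satisfies $\mathcal{P}(1) = 1$. -/

import Mathlib

/-!
Let `S` be simple random walk on `ℤ` from `0` and `τ` its exit time from `(-n, n)`. The Chebyshev
recurrence `(T_{j-1}(x) + T_{j+1}(x)) / 2 = x T_j(x)` makes `z^m T_{S_m}(1/z)` a martingale up to
time `τ`, and `T_{±n}` agree, so optional stopping gives `T_n(1/z) E[z^τ] = 1`: the coefficients are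
`P(τ = m)`. The remainder `z^m E[T_{S_m}(1/z); τ > m]` tends to `0` because at the root
`x = cos(π/(2n))` of `T_n` the same identity reads `E[T_{S_m}(x); τ > m] = x^m`, while
`T_j(x) = cos(jπ/(2n)) > 0` for `|j| < n`, so the survival probabilities decay geometrically.
-/

open Polynomial Polynomial.Chebyshev Finset Filter Topology Real
open Function (support support_mul_subset_left)

namespace SimpleRandomWalk

noncomputable def avg (f : ℤ → ℝ) (j : ℤ) : ℝ := (f (j - 1) + f (j + 1)) / 2

lemma summable_mul_of_support_finite {f : ℤ → ℝ} (hf : (support f).Finite) (g : ℤ → ℝ) :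
    Summable fun j => f j * g j :=
  summable_of_hasFiniteSupport (hf.subset (support_mul_subset_left f g))

lemma tsum_avg_mul {f : ℤ → ℝ} (hf : (support f).Finite) (h : ℤ → ℝ) :
    ∑' j, avg f j * h j = ∑' j, f j * avg h j := by
  have shift (k : ℤ) : ∑' j, f (j + k) * h j = ∑' j, f j * h (j - k) := by
    simpa using (Equiv.addRight k).tsum_eq fun j => f j * h (j - k)
  have summable_shift (k : ℤ) : Summable fun j => f (j + k) * h j :=
    summable_mul_of_support_finite (hf.preimage (add_left_injective k).injOn) h
  have hl (j : ℤ) : avg f j * h j = (f (j + -1) * h j + f (j + 1) * h j) / 2 := by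
    simp only [avg]; ring_nf
  have hr (j : ℤ) : f j * avg h j = (f j * h (j - -1) + f j * h (j - 1)) / 2 := by
    simp only [avg]; ring_nf
  simp only [hl, hr, tsum_div_const]
  rw [(summable_shift _).tsum_add (summable_shift _), shift, shift,
    (summable_mul_of_support_finite hf _).tsum_add (summable_mul_of_support_finite hf _)]

lemma avg_T_eval (x : ℝ) (j : ℤ) : avg (fun i => (T ℝ i).eval x) j = x * (T ℝ j).eval x := by
  have := congrArg (eval x) (T_add_one ℝ j)
  simp only [eval_sub, eval_mul, eval_ofNat, eval_X] at this
  simp only [avg, this]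
  ring

-- `killedWalk n m j = P(S_m = j, τ > m)`
noncomputable def killedWalk (n : ℕ) : ℕ → ℤ → ℝ
  | 0, j => if j = 0 then 1 else 0
  | m + 1, j => if |j| < n then avg (killedWalk n m) j else 0

-- `exitProb n m = P(τ = m)`
noncomputable def exitProb (n : ℕ) : ℕ → ℝ
  | 0 => 0
  | m + 1 => avg (killedWalk n m) n + avg (killedWalk n m) (-n)

-- `chebMoment n m x = E[T_{S_m}(x); τ > m]`
noncomputable def chebMoment (n m : ℕ) (x : ℝ) : ℝ :=
  ∑ j ∈ Ioo (-(n : ℤ)) n, killedWalk n m j * (T ℝ j).eval x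

variable {n : ℕ}

lemma killedWalk_nonneg (m : ℕ) (j : ℤ) : 0 ≤ killedWalk n m j := by
  induction m generalizing j with
  | zero => simp only [killedWalk]; split_ifs <;> norm_num
  | succ m ih =>
    simp only [killedWalk, avg]
    split_ifs
    · linarith [ih (j - 1), ih (j + 1)]
    · rfl

lemma exitProb_nonneg (m : ℕ) : 0 ≤ exitProb n m := by
  cases m with
  | zero => rfl
  | succ m =>
    simp only [exitProb, avg]
    linarith [killedWalk_nonneg (n := n) m (n - 1), killedWalk_nonneg (n := n) m (n + 1),
      killedWalk_nonneg (n := n) m (-n - 1), killedWalk_nonneg (n := n) m (-n + 1)]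

lemma killedWalk_eq_zero (hn : 0 < n) (m : ℕ) {j : ℤ} (hj : n ≤ |j|) : killedWalk n m j = 0 := by
  cases m with
  | zero => simp only [killedWalk]; rw [if_neg]; rintro rfl; simp at hj; omega
  | succ m => simp only [killedWalk]; rw [if_neg hj.not_gt]

lemma killedWalk_eq_zero_of_notMem (hn : 0 < n) (m : ℕ) {j : ℤ} (hj : j ∉ Ioo (-(n : ℤ)) n) :
    killedWalk n m j = 0 :=
  killedWalk_eq_zero hn m (by rw [mem_Ioo, ← abs_lt] at hj; omega)

lemma chebMoment_succ (hn : 0 < n) (m : ℕ) (x : ℝ) :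
    chebMoment n (m + 1) x = x * chebMoment n m x - exitProb n (m + 1) * (T ℝ n).eval x := by
  have hf : (support (killedWalk n m)).Finite :=
    (Ioo (-(n : ℤ)) n).finite_toSet.subset fun j hj => by
      by_contra hj'; exact hj (killedWalk_eq_zero_of_notMem hn m hj')
  have before : ∑' j, avg (killedWalk n m) j * (T ℝ j).eval x = x * chebMoment n m x := by
    rw [tsum_avg_mul hf, chebMoment, mul_sum]
    simp only [avg_T_eval]
    rw [tsum_eq_sum fun j hj => by rw [killedWalk_eq_zero_of_notMem hn m hj, zero_mul]]
    exact sum_congr rfl fun j _ => by ring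
  have after : ∑' j, avg (killedWalk n m) j * (T ℝ j).eval x =
      chebMoment n (m + 1) x + exitProb n (m + 1) * (T ℝ n).eval x := by
    have outside (j : ℤ) (hj : j ∉ insert (n : ℤ) (insert (-(n : ℤ)) (Ioo (-(n : ℤ)) n))) :
        avg (killedWalk n m) j * (T ℝ j).eval x = 0 := by
      simp only [mem_insert, mem_Ioo, not_or, not_and_or, not_lt] at hj
      rw [avg, killedWalk_eq_zero hn, killedWalk_eq_zero hn, add_zero, zero_div, zero_mul] <;>
        rw [le_abs] <;> omega
    rw [tsum_eq_sum outside, sum_insert (by simp; omega), sum_insert (by simp), T_neg, chebMoment]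
    have interior : ∑ j ∈ Ioo (-(n : ℤ)) n, avg (killedWalk n m) j * (T ℝ j).eval x =
        ∑ j ∈ Ioo (-(n : ℤ)) n, killedWalk n (m + 1) j * (T ℝ j).eval x :=
      sum_congr rfl fun j hj => by rw [killedWalk, if_pos (abs_lt.2 (mem_Ioo.1 hj))]
    rw [interior, exitProb]
    ring
  linarith

lemma chebMoment_zero (hn : 0 < n) (x : ℝ) : chebMoment n 0 x = 1 := by
  rw [chebMoment, sum_eq_single_of_mem 0 (by simpa using hn)]
  · simp [killedWalk]
  · intro j _ hj; simp [killedWalk, hj]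

lemma T_mul_sum_exitProb_add_pow_mul_chebMoment (hn : 0 < n) {z : ℝ} (hz : z ≠ 0) (m : ℕ) :
    (T ℝ n).eval z⁻¹ * ∑ i ∈ range (m + 1), exitProb n i * z ^ i +
      z ^ m * chebMoment n m z⁻¹ = 1 := by
  induction m with
  | zero => simp [chebMoment_zero hn, exitProb]
  | succ m ih =>
    rw [sum_range_succ, chebMoment_succ hn, ← ih]
    field_simp
    ring

lemma chebMoment_cos (hn : 0 < n) (m : ℕ) :
    chebMoment n m (cos (π / (2 * n))) = cos (π / (2 * n)) ^ m := by
  have hroot : (T ℝ n).eval (cos (π / (2 * n))) = 0 := by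
    have : (n : ℝ) * (π / (2 * n)) = π / 2 := by field_simp
    rw [T_real_cos, Int.cast_natCast, this, cos_pi_div_two]
  induction m with
  | zero => rw [chebMoment_zero hn, pow_zero]
  | succ m ih => rw [chebMoment_succ hn, ih, hroot, mul_zero, sub_zero, pow_succ']

lemma T_eval_cos_pos (hn : 0 < n) {j : ℤ} (hj : |j| < n) :
    0 < (T ℝ j).eval (cos (π / (2 * n))) := by
  rw [T_real_cos]
  have hj' : |(j : ℝ)| < n := by exact_mod_cast hj
  have : |j * (π / (2 * n))| < π / 2 := by
    have hn' : (0 : ℝ) < n := by exact_mod_cast hn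
    rw [abs_mul, abs_of_pos (a := π / (2 * n)) (by positivity)]
    calc |(j : ℝ)| * (π / (2 * n)) < n * (π / (2 * n)) := by gcongr
      _ = π / 2 := by field_simp
  exact cos_pos_of_mem_Ioo (abs_lt.1 this)

lemma cos_pi_div_two_mul_mem_Ico (hn : 0 < n) : cos (π / (2 * n)) ∈ Set.Ico 0 1 := by
  have hn' : (1 : ℝ) ≤ n := by exact_mod_cast hn
  have hpos : 0 < π / (2 * n) := by positivity
  have hle : π / (2 * n) ≤ π / 2 := by gcongr; linarith
  refine ⟨cos_nonneg_of_mem_Icc ⟨by linarith, hle⟩, ?_⟩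
  simpa using cos_lt_cos_of_nonneg_of_le_pi le_rfl (by linarith [pi_pos]) hpos

lemma killedWalk_mul_T_eval_cos_le (hn : 0 < n) (m : ℕ) {j : ℤ} (hj : |j| < n) :
    killedWalk n m j * (T ℝ j).eval (cos (π / (2 * n))) ≤ cos (π / (2 * n)) ^ m := by
  rw [← chebMoment_cos hn m, chebMoment]
  refine single_le_sum (f := fun i => killedWalk n m i * (T ℝ i).eval (cos (π / (2 * n))))
    (fun i hi => ?_) (mem_Ioo.2 (abs_lt.1 hj))
  exact mul_nonneg (killedWalk_nonneg m i) (T_eval_cos_pos hn (abs_lt.2 (mem_Ioo.1 hi))).le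

lemma tendsto_killedWalk (hn : 0 < n) (j : ℤ) :
    Tendsto (fun m => killedWalk n m j) atTop (𝓝 0) := by
  by_cases hj : |j| < n
  · have hcos := cos_pi_div_two_mul_mem_Ico hn
    have hpow := (tendsto_pow_atTop_nhds_zero_of_lt_one hcos.1 hcos.2).div_const
      ((T ℝ j).eval (cos (π / (2 * n))))
    rw [zero_div] at hpow
    refine squeeze_zero (killedWalk_nonneg · j) (fun m => ?_) hpow
    rw [le_div_iff₀ (T_eval_cos_pos hn hj)]
    exact killedWalk_mul_T_eval_cos_le hn m hj
  · simp only [killedWalk_eq_zero hn _ (not_lt.1 hj), tendsto_const_nhds]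

lemma tendsto_chebMoment (hn : 0 < n) (x : ℝ) : Tendsto (chebMoment n · x) atTop (𝓝 0) := by
  simpa [chebMoment] using tendsto_finsetSum (Ioo (-(n : ℤ)) n)
    fun j _ => (tendsto_killedWalk hn j).mul_const ((T ℝ j).eval x)

lemma tendsto_T_mul_sum_exitProb (hn : 0 < n) {z : ℝ} (hz : |z| ≤ 1) (hz0 : z ≠ 0) :
    Tendsto (fun m => (T ℝ n).eval z⁻¹ * ∑ i ∈ range m, exitProb n i * z ^ i) atTop (𝓝 1) := by
  rw [← tendsto_add_atTop_iff_nat 1]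
  have hrem : Tendsto (fun m => z ^ m * chebMoment n m z⁻¹) atTop (𝓝 0) := by
    refine squeeze_zero_norm (fun m => ?_) (by simpa using (tendsto_chebMoment hn z⁻¹).norm)
    rw [norm_mul, norm_pow]
    exact mul_le_of_le_one_left (norm_nonneg _) (pow_le_one₀ (norm_nonneg z) hz)
  convert (tendsto_const_nhds (x := (1 : ℝ))).sub hrem using 2 with m
  · rw [eq_sub_iff_add_eq, T_mul_sum_exitProb_add_pow_mul_chebMoment hn hz0]
  · rw [sub_zero]

lemma hasSum_exitProb (hn : 0 < n) : HasSum (exitProb n) 1 := by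
  rw [hasSum_iff_tendsto_nat_of_nonneg exitProb_nonneg]
  simpa using tendsto_T_mul_sum_exitProb hn (z := 1) (by norm_num) one_ne_zero

lemma hasSum_exitProb_mul_pow (hn : 0 < n) {z : ℝ} (hz : |z| ≤ 1) (hz0 : z ≠ 0) :
    HasSum (fun i => exitProb n i * z ^ i) ((T ℝ n).eval z⁻¹)⁻¹ := by
  have hsum : Summable fun i => exitProb n i * z ^ i := by
    refine (hasSum_exitProb hn).summable.of_norm_bounded fun i => ?_
    rw [norm_mul, norm_pow, Real.norm_of_nonneg (exitProb_nonneg i)]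
    exact mul_le_of_le_one_right (exitProb_nonneg i) (pow_le_one₀ (norm_nonneg z) hz)
  have hprod := tendsto_nhds_unique (hsum.hasSum.tendsto_sum_nat.const_mul _)
    (tendsto_T_mul_sum_exitProb hn hz hz0)
  rw [← eq_inv_of_mul_eq_one_right hprod]
  exact hsum.hasSum

end SimpleRandomWalk

/-- For the Chebyshev polynomial `T n` (`n ≥ 1`), the function `z ↦ 1 / T n (1/z)`
is the probability generating function of a random variable with values in the
positive integers: its power series has nonnegative coefficients, vanishing constant
term, converges for `|z| ≤ 1`, and its value at `z = 1` is `1`. -/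
theorem stmt2 (n : ℕ) (hn : 1 ≤ n) :
    ∃ c : ℕ → ℝ, (∀ i, 0 ≤ c i) ∧ c 0 = 0 ∧ HasSum c 1 ∧
      ∀ z : ℝ, |z| ≤ 1 → z ≠ 0 →
        HasSum (fun i => c i * z ^ i) (1 / (T ℝ n).eval (1 / z)) :=
  ⟨SimpleRandomWalk.exitProb n, SimpleRandomWalk.exitProb_nonneg, rfl,
    SimpleRandomWalk.hasSum_exitProb hn, fun _ hz hz0 => by
      simpa only [one_div] using SimpleRandomWalk.hasSum_exitProb_mul_pow hn hz hz0⟩
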